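/- The intersection ⋂_{i=1}^{n} L[M_i] is empty if and only if the set of reset words of the DFA 𝒜 equals I, i.e. Syn(𝒜) = I. -/

import Mathlib

/-- The transition function of a DFA extended to words (read left to right). -/
def deltaStar {Q A : Type} (δ : Q → A → Q) (q : Q) (w : List A) : Q :=
  w.foldl δ q

/-- `w` is a reset word for the DFA with transition function `δ`. -/
def IsReset {Q A : Type} (δ : Q → A → Q) (w : List A) : Prop :=
  ∀ q q' : Q, deltaStar δ q w = deltaStar δ q' w

/-- The set of reset words of a DFA. -/
def Syn {Q A : Type} (δ : Q → A → Q) : Set (List A) :=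
  {w | IsReset δ w}

/-- The alphabet Δ = Σ ∪ {x,y,z}: `Sum.inl a` is a letter of Σ, and
`Sum.inr 0`, `Sum.inr 1`, `Sum.inr 2` are the new letters x, y, z. -/
abbrev Alph (σ : Type) : Type := σ ⊕ Fin 3

def xL {σ : Type} : Alph σ := Sum.inr 0
def yL {σ : Type} : Alph σ := Sum.inr 1
def zL {σ : Type} : Alph σ := Sum.inr 2

/-- The state set Q of the DFA 𝒜: the disjoint union of the state sets `Qst i`
of the DFAs `M i`, together with two new states: `Sum.inr false` is the sink `s`
and `Sum.inr true` is the state `h`. -/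
abbrev StA {n : ℕ} (Qst : Fin n → Type) : Type := (Σ i, Qst i) ⊕ Bool

def sA {n : ℕ} {Qst : Fin n → Type} : StA Qst := Sum.inr false
def hA {n : ℕ} {Qst : Fin n → Type} : StA Qst := Sum.inr true

/-- The transition function φ of the DFA 𝒜. -/
def phi {n : ℕ} {σ : Type} {Qst : Fin n → Type}
    (δi : ∀ i, Qst i → σ → Qst i) (qinit : ∀ i, Qst i)
    (Fi : ∀ i, Set (Qst i)) [∀ i, DecidablePred (· ∈ Fi i)] :
    StA Qst → Alph σ → StA Qst
  | Sum.inl ⟨i, q⟩, Sum.inl a => Sum.inl ⟨i, δi i q a⟩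
  | Sum.inl ⟨i, q⟩, Sum.inr k =>
      if k = 0 then Sum.inl ⟨i, qinit i⟩          -- φ(q, x) = qᵢ
      else if k = 1 then sA                        -- φ(q, y) = s
      else if q ∈ Fi i then sA else hA             -- φ(q, z) = s on Fᵢ, h off Fᵢ
  | Sum.inr _, _ => sA                             -- φ(s,·) = φ(h,·) = s

/-- The language accepted by the DFA `M i = ⟨Qst i, σ, δi i, qinit i, Fi i⟩`. -/
def LM {n : ℕ} {σ : Type} {Qst : Fin n → Type}
    (δi : ∀ i, Qst i → σ → Qst i) (qinit : ∀ i, Qst i)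
    (Fi : ∀ i, Set (Qst i)) (i : Fin n) : Set (List σ) :=
  {w | deltaStar (δi i) (qinit i) w ∈ Fi i}

/-- `w ∈ (Σ ∪ {x})*`, i.e. `w` contains no occurrence of the letters y and z. -/
def noYZ {σ : Type} (w : List (Alph σ)) : Prop := yL ∉ w ∧ zL ∉ w

/-- L₁ = (Σ∪{x})* y Δ* -/
def L1 {σ : Type} : Set (List (Alph σ)) :=
  {w | ∃ u v, noYZ u ∧ w = u ++ yL :: v}

/-- L₂ = (Σ∪{x})* z Δ⁺ -/
def L2 {σ : Type} : Set (List (Alph σ)) :=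
  {w | ∃ u v, noYZ u ∧ v ≠ [] ∧ w = u ++ zL :: v}

/-- The ideal language I = L₁ ∪ L₂. -/
def ISet {σ : Type} : Set (List (Alph σ)) := L1 ∪ L2

/-! A reset word of `𝒜` must drive every state into the sink `s`. Such a word
cannot avoid y and z, since a word over Σ ∪ {x} keeps each component inside itself;
it is of the form `u y v`, `u z v` with `v` nonempty (these lie in `I` and are reset
words), or `u z` with `u` over Σ ∪ {x}. In the last case `u z` is a reset word iff
from every state of every `M i` the word `u` leads into `Fi i`; as `x` returns every
component to its initial state, this happens for some `u` iff some word over Σ is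
accepted by all the `M i`, witnessed by `x t z` with `t` in the intersection. -/

section DFA

variable {Q A : Type} (δ : Q → A → Q)

lemma deltaStar_append (q : Q) (u v : List A) :
    deltaStar δ q (u ++ v) = deltaStar δ (deltaStar δ q u) v :=
  List.foldl_append

lemma deltaStar_cons (q : Q) (a : A) (w : List A) :
    deltaStar δ q (a :: w) = deltaStar δ (δ q a) w := rfl

variable {δ}

lemma deltaStar_of_absorbing {s : Q} (hs : ∀ a, δ s a = s) (w : List A) :
    deltaStar δ s w = s := by
  induction w with
  | nil => rfl
  | cons a w ih => rw [deltaStar_cons, hs, ih]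

lemma mem_syn_iff_of_absorbing {s : Q} (hs : ∀ a, δ s a = s) (w : List A) :
    w ∈ Syn δ ↔ ∀ q, deltaStar δ q w = s :=
  ⟨fun h q => (h q s).trans (deltaStar_of_absorbing hs w),
    fun h q q' => (h q).trans (h q').symm⟩

end DFA

section Letters

variable {σ : Type}

lemma noYZ_nil : noYZ ([] : List (Alph σ)) := by
  simp [noYZ]

lemma noYZ_cons {c : Alph σ} {u : List (Alph σ)} :
    noYZ (c :: u) ↔ c ≠ yL ∧ c ≠ zL ∧ noYZ u := by
  simp only [noYZ, List.mem_cons, not_or]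
  tauto

lemma noYZ_append_singleton {u : List (Alph σ)} {c : Alph σ} :
    noYZ (u ++ [c]) ↔ noYZ u ∧ c ≠ yL ∧ c ≠ zL := by
  simp only [noYZ, List.mem_append, List.mem_singleton, not_or]
  tauto

lemma noYZ_or_eq_append_cons (w : List (Alph σ)) :
    noYZ w ∨ ∃ u c v, noYZ u ∧ (c = yL ∨ c = zL) ∧ w = u ++ c :: v := by
  induction w with
  | nil => exact Or.inl noYZ_nil
  | cons a w ih =>
    by_cases hy : a = yL
    · exact Or.inr ⟨[], a, w, noYZ_nil, Or.inl hy, rfl⟩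
    by_cases hz : a = zL
    · exact Or.inr ⟨[], a, w, noYZ_nil, Or.inr hz, rfl⟩
    rcases ih with h | ⟨u, c, v, hu, hc, rfl⟩
    · exact Or.inl (noYZ_cons.2 ⟨hy, hz, h⟩)
    · exact Or.inr ⟨a :: u, c, v, noYZ_cons.2 ⟨hy, hz, hu⟩, hc, rfl⟩

end Letters

section Construction

variable {n : ℕ} {σ : Type} {Qst : Fin n → Type}
  (δi : ∀ i, Qst i → σ → Qst i) (qinit : ∀ i, Qst i)
  (Fi : ∀ i, Set (Qst i)) [∀ i, DecidablePred (· ∈ Fi i)]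

local notation "φ" => phi δi qinit Fi

lemma phi_sink (a : Alph σ) : φ sA a = sA := rfl

lemma phi_x {i : Fin n} (q : Qst i) : φ (Sum.inl ⟨i, q⟩) xL = Sum.inl ⟨i, qinit i⟩ := rfl

lemma phi_y (p : StA Qst) : φ p yL = sA := by
  rcases p with ⟨i, q⟩ | b <;> rfl

lemma phi_z_of_mem {i : Fin n} {q : Qst i} (hq : q ∈ Fi i) : φ (Sum.inl ⟨i, q⟩) zL = sA := by
  simp [phi, zL, hq]

lemma phi_z_of_notMem {i : Fin n} {q : Qst i} (hq : q ∉ Fi i) :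
    φ (Sum.inl ⟨i, q⟩) zL = hA := by
  simp [phi, zL, hq]

lemma phi_phi_z (p : StA Qst) (a : Alph σ) : φ (φ p zL) a = sA := by
  rcases p with ⟨i, q⟩ | b
  · by_cases hq : q ∈ Fi i
    · rw [phi_z_of_mem δi qinit Fi hq]; rfl
    · rw [phi_z_of_notMem δi qinit Fi hq]; rfl
  · rfl

lemma mem_syn_phi_iff (w : List (Alph σ)) : w ∈ Syn φ ↔ ∀ p, deltaStar φ p w = sA :=
  mem_syn_iff_of_absorbing (phi_sink δi qinit Fi) w

lemma deltaStar_phi_map_inl {i : Fin n} (q : Qst i) (t : List σ) :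
    deltaStar φ (Sum.inl ⟨i, q⟩) (t.map Sum.inl) = Sum.inl ⟨i, deltaStar (δi i) q t⟩ := by
  induction t generalizing q with
  | nil => rfl
  | cons a t ih => exact ih (δi i q a)

/-- The witness `t` is the part of `u` after its last `x`. -/
lemma exists_deltaStar_phi_init_of_noYZ {u : List (Alph σ)} (hu : noYZ u) :
    ∃ t : List σ, ∀ i,
      deltaStar φ (Sum.inl ⟨i, qinit i⟩) u = Sum.inl ⟨i, deltaStar (δi i) (qinit i) t⟩ := by
  induction u using List.reverseRecOn with
  | nil => exact ⟨[], fun i => rfl⟩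
  | append_singleton u c ih =>
    obtain ⟨hu, hcy, hcz⟩ := noYZ_append_singleton.1 hu
    obtain ⟨t, ht⟩ := ih hu
    rcases c with a | k
    · refine ⟨t ++ [a], fun i => ?_⟩
      rw [deltaStar_append, ht, deltaStar_append]
      rfl
    · have hk : k = 0 := by
        have : k ≠ 1 ∧ k ≠ 2 := ⟨fun h => hcy (by rw [h]; rfl), fun h => hcz (by rw [h]; rfl)⟩
        omega
      subst hk
      exact ⟨[], fun i => by rw [deltaStar_append, ht]; rfl⟩

lemma not_mem_syn_of_noYZ (i : Fin n) {u : List (Alph σ)} (hu : noYZ u) : u ∉ Syn φ := by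
  intro h
  obtain ⟨t, ht⟩ := exists_deltaStar_phi_init_of_noYZ δi qinit Fi hu
  have := (mem_syn_phi_iff δi qinit Fi u).1 h (Sum.inl ⟨i, qinit i⟩)
  rw [ht] at this
  cases this

lemma mem_iInter_LM_of_mem_syn {u : List (Alph σ)} (hu : noYZ u) (h : u ++ [zL] ∈ Syn φ) :
    ∃ t, t ∈ ⋂ i, LM δi qinit Fi i := by
  obtain ⟨t, ht⟩ := exists_deltaStar_phi_init_of_noYZ δi qinit Fi hu
  refine ⟨t, Set.mem_iInter.2 fun i => ?_⟩
  have hrun := (mem_syn_phi_iff δi qinit Fi _).1 h (Sum.inl ⟨i, qinit i⟩)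
  rw [deltaStar_append, ht] at hrun
  by_contra hF
  have : φ (Sum.inl ⟨i, deltaStar (δi i) (qinit i) t⟩) zL = sA := hrun
  rw [phi_z_of_notMem δi qinit Fi hF] at this
  cases this

lemma mem_syn_of_mem_iInter_LM {t : List σ} (ht : t ∈ ⋂ i, LM δi qinit Fi i) :
    xL :: t.map Sum.inl ++ [zL] ∈ Syn φ := by
  refine (mem_syn_phi_iff δi qinit Fi _).2 fun p => ?_
  rw [List.cons_append, deltaStar_cons]
  rcases p with ⟨i, q⟩ | b
  · rw [phi_x, deltaStar_append, deltaStar_phi_map_inl]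
    exact phi_z_of_mem δi qinit Fi (Set.mem_iInter.1 ht i)
  · exact deltaStar_of_absorbing (phi_sink δi qinit Fi) _

lemma ISet_subset_syn : ISet ⊆ Syn φ := by
  rintro w (⟨u, v, -, rfl⟩ | ⟨u, v, -, hv, rfl⟩) <;>
    refine (mem_syn_phi_iff δi qinit Fi _).2 fun p => ?_ <;>
    rw [deltaStar_append, deltaStar_cons]
  · rw [phi_y]
    exact deltaStar_of_absorbing (phi_sink δi qinit Fi) v
  · obtain ⟨a, v, rfl⟩ := List.exists_cons_of_ne_nil hv
    rw [deltaStar_cons, phi_phi_z]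
    exact deltaStar_of_absorbing (phi_sink δi qinit Fi) v

lemma syn_subset_ISet (h : (⋂ i, LM δi qinit Fi i) = ∅) : Syn φ ⊆ ISet := by
  intro w hw
  rcases noYZ_or_eq_append_cons w with hw0 | ⟨u, c, v, hu, rfl | rfl, rfl⟩
  · obtain ⟨i, -⟩ : ∃ i, [] ∉ LM δi qinit Fi i := by
      simpa [Set.mem_iInter] using Set.eq_empty_iff_forall_notMem.1 h []
    exact absurd hw (not_mem_syn_of_noYZ δi qinit Fi i hw0)
  · exact Or.inl ⟨u, v, hu, rfl⟩
  · rcases v with _ | ⟨a, v⟩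
    · obtain ⟨t, ht⟩ := mem_iInter_LM_of_mem_syn δi qinit Fi hu hw
      exact absurd ht (h ▸ Set.notMem_empty t)
    · exact Or.inr ⟨u, a :: v, hu, List.cons_ne_nil a v, rfl⟩

end Construction

lemma x_map_inl_z_notMem_ISet {σ : Type} (t : List σ) :
    xL :: t.map Sum.inl ++ [zL] ∉ (ISet : Set (List (Alph σ))) := by
  have hz : zL ∉ xL :: t.map (Sum.inl : σ → Alph σ) := by simp [xL, zL]
  rintro (⟨u, v, -, hw⟩ | ⟨u, v, -, hv, hw⟩)
  · have : yL ∈ xL :: t.map Sum.inl ++ [zL] := hw ▸ by simp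
    simp [xL, yL, zL] at this
  · exact hv ((List.append_cons_inj_of_notMem hz List.not_mem_nil).1 hw).2.2.symm

theorem inter_empty_iff_syn_A_eq_I_general
    (n : ℕ) (σ : Type)
    (Qst : Fin n → Type)
    (δi : ∀ i, Qst i → σ → Qst i) (qinit : ∀ i, Qst i)
    (Fi : ∀ i, Set (Qst i)) [∀ i, DecidablePred (· ∈ Fi i)] :
    (⋂ i, LM δi qinit Fi i) = ∅ ↔ Syn (phi δi qinit Fi) = ISet := by
  refine ⟨fun h => (syn_subset_ISet δi qinit Fi h).antisymm (ISet_subset_syn δi qinit Fi),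
    fun h => Set.eq_empty_iff_forall_notMem.2 fun t ht => ?_⟩
  exact x_map_inl_z_notMem_ISet t (h ▸ mem_syn_of_mem_iInter_LM δi qinit Fi ht)

/-- ⋂ᵢ L[Mᵢ] = ∅ iff Syn(𝒜) = I. -/
theorem inter_empty_iff_syn_A_eq_I
    (n : ℕ) (hn : 0 < n) (σ : Type) [Fintype σ]
    (Qst : Fin n → Type) [∀ i, Fintype (Qst i)]
    (δi : ∀ i, Qst i → σ → Qst i) (qinit : ∀ i, Qst i)
    (Fi : ∀ i, Set (Qst i)) [∀ i, DecidablePred (· ∈ Fi i)]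
    (hno : ∀ i (q : Qst i) (a : σ), δi i q a ≠ qinit i)
    (hqF : ∀ i, qinit i ∉ Fi i) :
    (⋂ i, LM δi qinit Fi i) = ∅ ↔ Syn (phi δi qinit Fi) = ISet :=
  inter_empty_iff_syn_A_eq_I_general n σ Qst δi qinit Fi
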